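/- arXiv:2404.12376 — 2 statements merged into one kernel-verified Lean document; each statement's English description precedes it below -/
import Mathlib

section
/- Let k ≥ 1, λ = 1, 0 < ρ < k!, η > 0, and let b ∈ {−1,1}^k with a = ∏_{j=1}^k b_j (a good neuron). Define the recursion on (w_1^(t),…,w_k^(t)) ∈ ℝ^k by w_j^(0) = b_j and w_j^(t+1) = (1−ηλ)·w_j^(t) + η·s̃ign_ρ( k!·a·∏_{i∈{1,…,k}, i≠j} w_i^(t) ) for each j ∈ {1,…,k}. Then b_j·w_j^(t) = 1 for all j ∈ {1,…,k} and all t ≥ 0. -/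
noncomputable section

/-- ±1 encoding of a Boolean bit. -/
def pm (b : Bool) : ℝ := if b then 1 else -1

/-- The modified (thresholded) sign function `s̃ign_ρ`. -/
def tsgn (ρ x : ℝ) : ℝ := if ρ ≤ |x| then Real.sign x else 0

lemma pm_mul_self (b : Bool) : pm b * pm b = 1 := by
  cases b <;> simp [pm]

/-- For a good neuron (`a = ∏_j b_j`), under the population sign-GD
recursion on the feature coordinates with `λ = 1` and `0 < ρ < k!`, the feature
coordinates stay at their initialization: `b_j · w_j^{(t)} = 1` for all `j`, `t`. -/
theorem good_neuron_feature_coordinates_stable (k : ℕ) (hk : 1 ≤ k)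
    (η lam ρ : ℝ) (hη : 0 < η) (hlam : lam = 1)
    (hρ0 : 0 < ρ) (hρ : ρ < (k.factorial : ℝ))
    (b : Fin k → Bool) (a : ℝ) (ha : a = ∏ j, pm (b j))
    (w : ℕ → Fin k → ℝ)
    (hw0 : ∀ j, w 0 j = pm (b j))
    (hrec : ∀ t j, w (t + 1) j =
      (1 - η * lam) * w t j +
        η * tsgn ρ ((k.factorial : ℝ) * a * ∏ i ∈ Finset.univ.erase j, w t i)) :
    ∀ t j, pm (b j) * w t j = 1 := by
  have hfac : (0:ℝ) < (k.factorial : ℝ) := by positivity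
  have key : ∀ t j, w t j = pm (b j) := by
    intro t
    induction t with
    | zero => exact hw0
    | succ t ih =>
      intro j
      rw [hrec t j, hlam]
      have hprod : ∏ i ∈ Finset.univ.erase j, w t i
          = ∏ i ∈ Finset.univ.erase j, pm (b i) := by
        exact Finset.prod_congr rfl (fun i _ => ih i)
      have harg : a * ∏ i ∈ Finset.univ.erase j, w t i = pm (b j) := by
        rw [hprod, ha, ← Finset.prod_erase_mul Finset.univ _ (Finset.mem_univ j)]
        rw [mul_comm _ (pm (b j)), mul_assoc, ← Finset.prod_mul_distrib]
        have : ∏ i ∈ Finset.univ.erase j, pm (b i) * pm (b i) = 1 :=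
          Finset.prod_eq_one (fun i _ => pm_mul_self (b i))
        rw [this, mul_one]
      rw [mul_assoc, harg]
      have htsgn : tsgn ρ ((k.factorial : ℝ) * pm (b j)) = pm (b j) := by
        unfold tsgn
        have habs : |(k.factorial : ℝ) * pm (b j)| = (k.factorial : ℝ) := by
          cases b j <;> simp [pm, abs_of_pos hfac, abs_of_neg, hfac.le]
        rw [habs, if_pos hρ.le]
        cases hb : b j
        · simp only [pm, hb, Bool.false_eq_true, if_false, mul_neg_one]
          rw [Real.sign_of_neg (by linarith)]
        · simp only [pm, hb, if_true, mul_one]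
          rw [Real.sign_of_pos hfac]
      rw [htsgn, ih j]; ring
  intro t j
  rw [key t j]
  exact pm_mul_self (b j)
end
end

section
/- Fix 1 ≤ k ≤ d, m neurons with weights w_r ∈ ℝ^d and second-layer signs a_r ∈ {−1,1}, a real α ≥ 0, and a point x ∈ {−1,1}^d. Say neuron r is good if a_r = ∏_{j=1}^k sign(w_{r,j}) and bad otherwise, and say a good neuron r has sign pattern b ∈ {−1,1}^k if sign(w_{r,j}) = b_j for all j ∈ {1,…,k}. Assume: (i) for every good neuron r and j ∈ {1,…,k}, w_{r,j} ∈ {−1,1}; (ii) |w_{r,j}| ≤ d^{−(k+1)} for every good neuron r and j ∈ {k+1,…,d}, and for every bad neuron r and all j ∈ {1,…,d}; (iii) for every b ∈ {−1,1}^k, the number of good neurons with sign pattern b is at most (1+α)m/2^{k+1}, and the numbers of good and of bad neurons are each at most (1+α)m/2; (iv) |Σ_{j=k+1}^d w_{r,j} x_j| ≤ d^{−k} for every r ∈ {1,…,m}. Then for any second-layer weights a'_1,…,a'_m ∈ ℝ with |a'_r − a_r| ≤ c for all r, | Σ_{r=1}^m a'_r·⟨w_r,x⟩^k − Σ_{r=1}^m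 a_r·⟨w_r,x⟩^k | ≤ c·( (1+α)·2^{−k}·k^k·(1+e^{−2})^k + 0.5·(1+α)·d^{−k}·k·(k+d^{−k})^k + 0.5·(1+α)·(2d^{−k})^k )·m. -/
open scoped Classical

noncomputable section

/-- Euclidean inner product of a real weight vector with a ±1 input. -/
def ip (d : ℕ) (w : Fin d → ℝ) (x : Fin d → Bool) : ℝ := ∑ i, w i * pm (x i)

/-- Neuron `r` is good: `a_r = ∏_{j=1}^k sign(w_{r,j})`. -/
def goodNeuron (k d m : ℕ) (W : Fin m → Fin d → ℝ) (a : Fin m → Bool) (r : Fin m) : Prop :=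
  pm (a r) = ∏ j ∈ Finset.univ.filter (fun j : Fin d => (j : ℕ) < k), Real.sign (W r j)

/-- Neuron `r` has sign pattern `b ∈ {−1,1}^k`: `sign(w_{r,j}) = b_j` for `j ∈ {1,…,k}`. -/
def hasPattern (k d m : ℕ) (hkd : k ≤ d) (W : Fin m → Fin d → ℝ) (b : Fin k → Bool)
    (r : Fin m) : Prop :=
  ∀ j : Fin k, Real.sign (W r (Fin.castLE hkd j)) = pm (b j)

/-!
The perturbation changes the output by at most `c · ∑_r |⟨w_r, x⟩|^k`. Split `⟨w_r, x⟩` into a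
head (coordinates `< k`) and a tail, which is at most `t = d^{-k}` by (iv). For a bad neuron the
head is at most `d · d^{-(k+1)} = t`, so `|⟨w_r, x⟩|^k ≤ (2t)^k`. For a good neuron the head is
`∑_{i<k} b_i x_i` with `b` its sign pattern, and `(|head| + t)^k ≤ |head|^k + k t (k + t)^k`.
Grouping good neurons by pattern, the heads contribute at most `(1+α) m / 2^{k+1}` times
`∑_{ε ∈ {±1}^k} |∑_i ε_i|^k ≤ 2 k^k (1 + e^{-2})^k`. The latter comes from
`|s|^k ≤ k^k (e^{s-k} + e^{-s-k})` (that is, `y ≤ e^{y-1}` at `y = |s|/k`), whose right-hand side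
factorizes over the coordinates of `ε` when `s = ∑_i ε_i`.
-/

open Finset Real

lemma abs_pm (b : Bool) : |pm b| = 1 := by cases b <;> simp [pm]

lemma pm_mul_pm (u v : Bool) : pm u * pm v = pm (u == v) := by
  cases u <;> cases v <;> norm_num [pm]

lemma sign_eq_self_of_eq_one_or_eq_neg_one {w : ℝ} (hw : w = 1 ∨ w = -1) : Real.sign w = w := by
  rcases hw with rfl | rfl <;> simp [Real.sign_of_pos, Real.sign_of_neg]

lemma sign_eq_pm_decide_pos {w : ℝ} (hw : w ≠ 0) : Real.sign w = pm (decide (0 < w)) := by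
  rcases hw.lt_or_gt with hw | hw
  · simp [pm, Real.sign_of_neg hw, hw.not_gt]
  · simp [pm, Real.sign_of_pos hw, hw]

lemma sum_comp_pm_mul_pm {ι : Type*} [Fintype ι] [DecidableEq ι] (y : ι → Bool)
    (F : (ι → ℝ) → ℝ) :
    ∑ b : ι → Bool, F (fun i => pm (b i) * pm (y i)) = ∑ ε : ι → Bool, F (fun i => pm (ε i)) := by
  have hinv : Function.Involutive fun (b : ι → Bool) i => b i == y i := fun b => by
    funext i
    show ((b i == y i) == y i) = b i
    cases b i <;> cases y i <;> rfl
  simp_rw [pm_mul_pm]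
  exact Fintype.sum_bijective _ hinv.bijective _ _ fun b => rfl

lemma pow_le_pow_mul_exp_sub {s : ℝ} (hs : 0 ≤ s) (k : ℕ) :
    s ^ k ≤ (k : ℝ) ^ k * exp (s - k) := by
  rcases k.eq_zero_or_pos with rfl | hk
  · simpa using hs
  have hk' : (0 : ℝ) < k := by exact_mod_cast hk
  have hbase : s ≤ k * exp (s / k - 1) := by
    have := Real.add_one_le_exp (s / k - 1)
    rw [sub_add_cancel] at this
    calc s = k * (s / k) := by field_simp
      _ ≤ k * exp (s / k - 1) := by gcongr
  calc s ^ k ≤ (k * exp (s / k - 1)) ^ k := by gcongr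
    _ = (k : ℝ) ^ k * exp (s - k) := by
      rw [mul_pow, ← Real.exp_nat_mul]
      congr 2
      field_simp

lemma abs_pow_le_mul_exp_add_exp (s : ℝ) (k : ℕ) :
    |s| ^ k ≤ (k : ℝ) ^ k * (exp (s - k) + exp (-s - k)) := by
  refine (pow_le_pow_mul_exp_sub (abs_nonneg s) k).trans ?_
  gcongr
  rcases abs_choice s with h | h <;> rw [h] <;> linarith [exp_pos (s - k), exp_pos (-s - k)]

lemma sum_abs_sum_pm_pow_le (k : ℕ) :
    ∑ ε : Fin k → Bool, |∑ j, pm (ε j)| ^ k ≤ 2 * (k : ℝ) ^ k * (1 + exp (-2)) ^ k := by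
  have hfactor : ∀ (σ : ℝ) (ε : Fin k → Bool),
      exp (σ * ∑ j, pm (ε j) - k) = ∏ j, exp (σ * pm (ε j) - 1) := by
    intro σ ε
    rw [← exp_sum, sum_sub_distrib, ← mul_sum]
    simp
  have hsum : ∀ σ : ℝ, ∑ ε : Fin k → Bool, exp (σ * ∑ j, pm (ε j) - k) =
      (exp (σ - 1) + exp (-σ - 1)) ^ k := by
    intro σ
    have hb : exp (σ - 1) + exp (-σ - 1) = ∑ b, exp (σ * pm b - 1) := by
      simp [pm, sub_eq_add_neg]
    simp_rw [hfactor, hb, ← Fin.prod_const, Fintype.prod_sum]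
  calc ∑ ε : Fin k → Bool, |∑ j, pm (ε j)| ^ k
      ≤ ∑ ε : Fin k → Bool, (k : ℝ) ^ k *
          (exp (1 * ∑ j, pm (ε j) - k) + exp ((-1) * ∑ j, pm (ε j) - k)) := by
        gcongr with ε
        simpa using abs_pow_le_mul_exp_add_exp _ k
    _ = 2 * (k : ℝ) ^ k * (1 + exp (-2)) ^ k := by
        rw [← mul_sum, sum_add_distrib, hsum, hsum]
        norm_num
        ring

lemma add_pow_le_pow_add_mul {s t : ℝ} (hs : 0 ≤ s) (ht : 0 ≤ t) {k : ℕ} (hsk : s ≤ k) :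
    (s + t) ^ k ≤ s ^ k + k * t * (k + t) ^ k := by
  rcases k.eq_zero_or_pos with rfl | hk
  · simp
  have hdiff := le_of_abs_le (abs_pow_sub_pow_le (s + t) s k)
  rw [add_sub_cancel_left, abs_of_nonneg ht, abs_of_nonneg (by positivity : 0 ≤ s + t),
    abs_of_nonneg hs, max_eq_left (by linarith)] at hdiff
  have hk1 : (1 : ℝ) ≤ k := by exact_mod_cast hk
  calc (s + t) ^ k ≤ s ^ k + t * k * (s + t) ^ (k - 1) := by linarith
    _ ≤ s ^ k + t * k * (k + t) ^ (k - 1) := by gcongr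
    _ ≤ s ^ k + k * t * (k + t) ^ k := by
        rw [mul_comm t]
        gcongr
        exacts [by linarith, Nat.sub_le k 1]

lemma abs_sum_mul_sub_sum_mul_le {ι : Type*} [Fintype ι] {a a' f : ι → ℝ} {c : ℝ}
    (h : ∀ i, |a' i - a i| ≤ c) :
    |∑ i, a' i * f i - ∑ i, a i * f i| ≤ c * ∑ i, |f i| := by
  rw [← sum_sub_distrib, mul_sum]
  refine (abs_sum_le_sum_abs _ _).trans (sum_le_sum fun i _ => ?_)
  rw [← sub_mul, abs_mul]
  exact mul_le_mul_of_nonneg_right (h i) (abs_nonneg _)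

lemma sum_le_mul_of_card_le {ι : Type*} {s : Finset ι} {f : ι → ℝ} {B C : ℝ}
    (hf : ∀ i ∈ s, f i ≤ B) (hB : 0 ≤ B) (hs : (s.card : ℝ) ≤ C) : ∑ i ∈ s, f i ≤ C * B :=
  (sum_le_card_nsmul s f B hf).trans (by rw [nsmul_eq_mul]; gcongr)

section Neurons

variable {k d m : ℕ} {W : Fin m → Fin d → ℝ} {a : Fin m → Bool}

variable (k) in
def headSum (w : Fin d → ℝ) (x : Fin d → Bool) : ℝ :=
  ∑ j ∈ univ.filter (fun j : Fin d => (j : ℕ) < k), w j * pm (x j)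

variable (k) in
def tailSum (w : Fin d → ℝ) (x : Fin d → Bool) : ℝ :=
  ∑ j ∈ univ.filter (fun j : Fin d => k ≤ (j : ℕ)), w j * pm (x j)

variable (k) in
lemma ip_eq_headSum_add_tailSum (w : Fin d → ℝ) (x : Fin d → Bool) :
    ip d w x = headSum k w x + tailSum k w x := by
  rw [ip, headSum, tailSum, ← sum_filter_add_sum_filter_not univ (fun j : Fin d => (j : ℕ) < k)]
  simp only [not_lt]

lemma headSum_eq_sum_castLE (hkd : k ≤ d) (w : Fin d → ℝ) (x : Fin d → Bool) :
    headSum k w x = ∑ i : Fin k, w (Fin.castLE hkd i) * pm (x (Fin.castLE hkd i)) := by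
  have hrange : univ.filter (fun j : Fin d => (j : ℕ) < k) = univ.map (Fin.castLEEmb hkd) := by
    ext j
    simp only [mem_filter, mem_univ, true_and, mem_map, Fin.coe_castLEEmb]
    exact ⟨fun hj => ⟨⟨j, hj⟩, rfl⟩, by rintro ⟨i, rfl⟩; exact i.isLt⟩
  rw [headSum, hrange, sum_map]
  rfl

lemma abs_headSum_le_inv_pow {w : Fin d → ℝ} (hw : ∀ j, |w j| ≤ ((d : ℝ) ^ (k + 1))⁻¹)
    (x : Fin d → Bool) : |headSum k w x| ≤ ((d : ℝ) ^ k)⁻¹ :=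
  calc |headSum k w x| ≤ ∑ j : Fin d, |w j * pm (x j)| :=
        (abs_sum_le_sum_abs _ _).trans
          (sum_le_sum_of_subset_of_nonneg (subset_univ _) fun _ _ _ => abs_nonneg _)
    _ ≤ ∑ _j : Fin d, ((d : ℝ) ^ (k + 1))⁻¹ := by
        gcongr with j
        rw [abs_mul, abs_pm, mul_one]
        exact hw j
    _ = ((d : ℝ) ^ k)⁻¹ * (d * (d : ℝ)⁻¹) := by
        rw [sum_const, card_univ, Fintype.card_fin, nsmul_eq_mul, pow_succ, mul_inv]
        ring
    _ ≤ ((d : ℝ) ^ k)⁻¹ := mul_le_of_le_one_right (by positivity) mul_inv_le_one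

lemma abs_headSum_le (hkd : k ≤ d) {w : Fin d → ℝ}
    (hw : ∀ j : Fin d, (j : ℕ) < k → |w j| ≤ 1) (x : Fin d → Bool) : |headSum k w x| ≤ k :=
  calc |headSum k w x| ≤ ∑ i : Fin k, |w (Fin.castLE hkd i) * pm (x (Fin.castLE hkd i))| := by
        rw [headSum_eq_sum_castLE hkd]
        exact abs_sum_le_sum_abs _ _
    _ ≤ ∑ _i : Fin k, (1 : ℝ) := by
        gcongr with i
        rw [abs_mul, abs_pm, mul_one]
        exact hw _ i.isLt
    _ = k := by simp

def signPattern (hkd : k ≤ d) (w : Fin d → ℝ) : Fin k → Bool :=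
  fun i => decide (0 < w (Fin.castLE hkd i))

lemma hasPattern_signPattern (hkd : k ≤ d) {r : Fin m}
    (hW : ∀ i : Fin k, W r (Fin.castLE hkd i) ≠ 0) :
    hasPattern k d m hkd W (signPattern hkd (W r)) r :=
  fun i => sign_eq_pm_decide_pos (hW i)

lemma headSum_eq_of_hasPattern (hkd : k ≤ d) {r : Fin m} {b : Fin k → Bool}
    (hW : ∀ j : Fin d, (j : ℕ) < k → W r j = 1 ∨ W r j = -1)
    (hb : hasPattern k d m hkd W b r) (x : Fin d → Bool) :
    headSum k (W r) x = ∑ i, pm (b i) * pm (x (Fin.castLE hkd i)) := by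
  rw [headSum_eq_sum_castLE hkd]
  refine sum_congr rfl fun i _ => ?_
  rw [← hb i, sign_eq_self_of_eq_one_or_eq_neg_one (hW _ i.isLt)]

lemma sum_good_abs_headSum_pow_le (hkd : k ≤ d) (x : Fin d → Bool) {C : ℝ}
    (h1 : ∀ r, goodNeuron k d m W a r → ∀ j : Fin d, (j : ℕ) < k → W r j = 1 ∨ W r j = -1)
    (h3 : ∀ b : Fin k → Bool, ((univ.filter (fun r : Fin m =>
      goodNeuron k d m W a r ∧ hasPattern k d m hkd W b r)).card : ℝ) ≤ C) :
    ∑ r ∈ univ.filter (goodNeuron k d m W a), |headSum k (W r) x| ^ k ≤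
      C * (2 * (k : ℝ) ^ k * (1 + exp (-2)) ^ k) := by
  set good := univ.filter (goodNeuron k d m W a)
  set v : (Fin k → Bool) → ℝ := fun b => |∑ i, pm (b i) * pm (x (Fin.castLE hkd i))| ^ k
  have hC : 0 ≤ C := (Nat.cast_nonneg _).trans (h3 fun _ => true)
  have hfiber : ∀ b,
      ∑ r ∈ good with signPattern hkd (W r) = b, |headSum k (W r) x| ^ k ≤ C * v b := by
    intro b
    have hpattern : ∀ r ∈ good.filter (fun r => signPattern hkd (W r) = b),
        goodNeuron k d m W a r ∧ hasPattern k d m hkd W b r := by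
      intro r hr
      obtain ⟨hgood, rfl⟩ := mem_filter.1 hr
      refine ⟨(mem_filter.1 hgood).2, hasPattern_signPattern hkd fun i => ?_⟩
      rcases h1 r (mem_filter.1 hgood).2 (Fin.castLE hkd i) i.isLt with h | h <;> simp [h]
    calc ∑ r ∈ good with signPattern hkd (W r) = b, |headSum k (W r) x| ^ k
        = ∑ r ∈ good with signPattern hkd (W r) = b, v b := by
          refine sum_congr rfl fun r hr => ?_
          obtain ⟨hgood, hb⟩ := hpattern r hr
          rw [headSum_eq_of_hasPattern hkd (h1 r hgood) hb]
      _ ≤ C * v b := by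
          rw [sum_const, nsmul_eq_mul]
          gcongr
          refine le_trans ?_ (h3 b)
          exact_mod_cast card_le_card fun r hr => mem_filter.2 ⟨mem_univ r, hpattern r hr⟩
  calc ∑ r ∈ good, |headSum k (W r) x| ^ k
      = ∑ b, ∑ r ∈ good with signPattern hkd (W r) = b, |headSum k (W r) x| ^ k :=
        (sum_fiberwise_of_maps_to (fun _ _ => mem_univ _) _).symm
    _ ≤ ∑ b, C * v b := sum_le_sum fun b _ => hfiber b
    _ = C * ∑ ε : Fin k → Bool, |∑ i, pm (ε i)| ^ k := by
        rw [← mul_sum, sum_comp_pm_mul_pm _ fun v => |∑ i, v i| ^ k]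
    _ ≤ C * (2 * (k : ℝ) ^ k * (1 + exp (-2)) ^ k) := by
        gcongr
        exact sum_abs_sum_pm_pow_le k

lemma abs_ip_pow_le_of_good (hkd : k ≤ d) {w : Fin d → ℝ}
    (hw : ∀ j : Fin d, (j : ℕ) < k → w j = 1 ∨ w j = -1) {x : Fin d → Bool} {t : ℝ}
    (ht : |tailSum k w x| ≤ t) :
    |ip d w x| ^ k ≤ |headSum k w x| ^ k + k * t * (k + t) ^ k := by
  have hhead : |headSum k w x| ≤ k := abs_headSum_le hkd (fun j hj => by
    rcases hw j hj with h | h <;> simp [h]) x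
  calc |ip d w x| ^ k ≤ (|headSum k w x| + t) ^ k := by
        rw [ip_eq_headSum_add_tailSum k]
        gcongr
        exact (abs_add_le _ _).trans (by gcongr)
    _ ≤ |headSum k w x| ^ k + k * t * (k + t) ^ k :=
        add_pow_le_pow_add_mul (abs_nonneg _) ((abs_nonneg _).trans ht) hhead

lemma abs_ip_le_of_bad {w : Fin d → ℝ} (hw : ∀ j, |w j| ≤ ((d : ℝ) ^ (k + 1))⁻¹)
    {x : Fin d → Bool} (ht : |tailSum k w x| ≤ ((d : ℝ) ^ k)⁻¹) :
    |ip d w x| ≤ 2 * ((d : ℝ) ^ k)⁻¹ := by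
  rw [ip_eq_headSum_add_tailSum k, two_mul]
  exact (abs_add_le _ _).trans (add_le_add (abs_headSum_le_inv_pow hw x) ht)

lemma sum_abs_ip_pow_le (hkd : k ≤ d) (x : Fin d → Bool) {α : ℝ}
    (h1 : ∀ r, goodNeuron k d m W a r → ∀ j : Fin d, (j : ℕ) < k → W r j = 1 ∨ W r j = -1)
    (h2b : ∀ r, ¬ goodNeuron k d m W a r → ∀ j, |W r j| ≤ ((d : ℝ) ^ (k + 1))⁻¹)
    (h3 : ∀ b : Fin k → Bool, ((univ.filter (fun r : Fin m =>
      goodNeuron k d m W a r ∧ hasPattern k d m hkd W b r)).card : ℝ) ≤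
        (1 + α) * m / 2 ^ (k + 1))
    (h3g : ((univ.filter (goodNeuron k d m W a)).card : ℝ) ≤ (1 + α) * m / 2)
    (h3b : ((univ.filter (fun r => ¬ goodNeuron k d m W a r)).card : ℝ) ≤ (1 + α) * m / 2)
    (h4 : ∀ r, |tailSum k (W r) x| ≤ ((d : ℝ) ^ k)⁻¹) :
    ∑ r, |ip d (W r) x| ^ k ≤
      (1 + α) * m / 2 ^ (k + 1) * (2 * (k : ℝ) ^ k * (1 + exp (-2)) ^ k) +
      (1 + α) * m / 2 * (k * ((d : ℝ) ^ k)⁻¹ * (k + ((d : ℝ) ^ k)⁻¹) ^ k) +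
      (1 + α) * m / 2 * (2 * ((d : ℝ) ^ k)⁻¹) ^ k := by
  set t := ((d : ℝ) ^ k)⁻¹
  have hgood : ∑ r ∈ univ.filter (goodNeuron k d m W a), |ip d (W r) x| ^ k ≤
      ∑ r ∈ univ.filter (goodNeuron k d m W a), |headSum k (W r) x| ^ k +
        ∑ r ∈ univ.filter (goodNeuron k d m W a), k * t * (k + t) ^ k := by
    rw [← sum_add_distrib]
    exact sum_le_sum fun r hr => abs_ip_pow_le_of_good hkd (h1 r (mem_filter.1 hr).2) (h4 r)
  have hbad : ∑ r ∈ univ.filter (fun r => ¬ goodNeuron k d m W a r), |ip d (W r) x| ^ k ≤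
      (1 + α) * m / 2 * (2 * t) ^ k :=
    sum_le_mul_of_card_le (fun r hr => pow_le_pow_left₀ (abs_nonneg _)
      (abs_ip_le_of_bad (h2b r (mem_filter.1 hr).2) (h4 r)) k) (by positivity) h3b
  rw [← sum_filter_add_sum_filter_not univ (goodNeuron k d m W a)]
  gcongr
  refine hgood.trans (add_le_add (sum_good_abs_headSum_pow_le hkd x h1 h3) ?_)
  exact sum_le_mul_of_card_le (fun _ _ => le_rfl) (by positivity) h3g

end Neurons

theorem second_layer_perturbation_bound_general (k d m : ℕ) (hkd : k ≤ d)
    (W : Fin m → Fin d → ℝ) (a : Fin m → Bool) (α : ℝ) (x : Fin d → Bool)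
    (h1 : ∀ r : Fin m, goodNeuron k d m W a r →
      ∀ j : Fin d, (j : ℕ) < k → W r j = 1 ∨ W r j = -1)
    (h2b : ∀ r : Fin m, ¬ goodNeuron k d m W a r →
      ∀ j : Fin d, |W r j| ≤ ((d : ℝ) ^ (k + 1))⁻¹)
    (h3 : ∀ b : Fin k → Bool,
      ((Finset.univ.filter (fun r : Fin m =>
          goodNeuron k d m W a r ∧ hasPattern k d m hkd W b r)).card : ℝ) ≤
        (1 + α) * m / 2 ^ (k + 1))
    (h3g : ((Finset.univ.filter (fun r : Fin m => goodNeuron k d m W a r)).card : ℝ) ≤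
      (1 + α) * m / 2)
    (h3b : ((Finset.univ.filter (fun r : Fin m => ¬ goodNeuron k d m W a r)).card : ℝ) ≤
      (1 + α) * m / 2)
    (h4 : ∀ r : Fin m,
      |∑ j ∈ Finset.univ.filter (fun j : Fin d => k ≤ (j : ℕ)), W r j * pm (x j)| ≤
        ((d : ℝ) ^ k)⁻¹)
    (c : ℝ) (hc : 0 < c) (a' : Fin m → ℝ) (ha' : ∀ r, |a' r - pm (a r)| ≤ c) :
    |(∑ r, a' r * ip d (W r) x ^ k) - ∑ r, pm (a r) * ip d (W r) x ^ k| ≤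
      c * ((1 + α) * ((2 : ℝ) ^ k)⁻¹ * (k : ℝ) ^ k * (1 + Real.exp (-2)) ^ k +
        0.5 * (1 + α) * ((d : ℝ) ^ k)⁻¹ * (k : ℝ) * ((k : ℝ) + ((d : ℝ) ^ k)⁻¹) ^ k +
        0.5 * (1 + α) * (2 * ((d : ℝ) ^ k)⁻¹) ^ k) * m := by
  calc _ ≤ c * ∑ r, |ip d (W r) x| ^ k := by
        simpa only [abs_pow] using abs_sum_mul_sub_sum_mul_le (f := fun r => ip d (W r) x ^ k) ha'
    _ ≤ c * _ := mul_le_mul_of_nonneg_left (sum_abs_ip_pow_le hkd x h1 h2b h3 h3g h3b h4) hc.le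
    _ = _ := by
        rw [pow_succ]
        field_simp
        ring

/-- Perturbing the ±1 second-layer weights by at most `c` changes the
network output by at most
`c·((1+α)·2^{−k}·k^k·(1+e^{−2})^k + 0.5·(1+α)·d^{−k}·k·(k+d^{−k})^k + 0.5·(1+α)·(2d^{−k})^k)·m`. -/
theorem second_layer_perturbation_bound (k d m : ℕ) (hk : 1 ≤ k) (hkd : k ≤ d)
    (W : Fin m → Fin d → ℝ) (a : Fin m → Bool) (α : ℝ) (hα : 0 ≤ α) (x : Fin d → Bool)
    (h1 : ∀ r : Fin m, goodNeuron k d m W a r →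
      ∀ j : Fin d, (j : ℕ) < k → W r j = 1 ∨ W r j = -1)
    (h2g : ∀ r : Fin m, goodNeuron k d m W a r →
      ∀ j : Fin d, k ≤ (j : ℕ) → |W r j| ≤ ((d : ℝ) ^ (k + 1))⁻¹)
    (h2b : ∀ r : Fin m, ¬ goodNeuron k d m W a r →
      ∀ j : Fin d, |W r j| ≤ ((d : ℝ) ^ (k + 1))⁻¹)
    (h3 : ∀ b : Fin k → Bool,
      ((Finset.univ.filter (fun r : Fin m =>
          goodNeuron k d m W a r ∧ hasPattern k d m hkd W b r)).card : ℝ) ≤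
        (1 + α) * m / 2 ^ (k + 1))
    (h3g : ((Finset.univ.filter (fun r : Fin m => goodNeuron k d m W a r)).card : ℝ) ≤
      (1 + α) * m / 2)
    (h3b : ((Finset.univ.filter (fun r : Fin m => ¬ goodNeuron k d m W a r)).card : ℝ) ≤
      (1 + α) * m / 2)
    (h4 : ∀ r : Fin m,
      |∑ j ∈ Finset.univ.filter (fun j : Fin d => k ≤ (j : ℕ)), W r j * pm (x j)| ≤
        ((d : ℝ) ^ k)⁻¹)
    (c : ℝ) (hc : 0 < c) (a' : Fin m → ℝ) (ha' : ∀ r, |a' r - pm (a r)| ≤ c) :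
    |(∑ r, a' r * ip d (W r) x ^ k) - ∑ r, pm (a r) * ip d (W r) x ^ k| ≤
      c * ((1 + α) * ((2 : ℝ) ^ k)⁻¹ * (k : ℝ) ^ k * (1 + Real.exp (-2)) ^ k +
        0.5 * (1 + α) * ((d : ℝ) ^ k)⁻¹ * (k : ℝ) * ((k : ℝ) + ((d : ℝ) ^ k)⁻¹) ^ k +
        0.5 * (1 + α) * (2 * ((d : ℝ) ^ k)⁻¹) ^ k) * m :=
  second_layer_perturbation_bound_general k d m hkd W a α x h1 h2b h3 h3g h3b h4 c hc a' ha'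
end
end
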